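/- Let X ∈ ℝ^{M×P}, Y ∈ ℝ^{M×Q}, and suppose the coefficient matrix is constrained to the form B = U C Vᵀ where U ∈ ℝ^{P×p} is fixed with orthonormal columns and V ∈ ℝ^{Q×q} is fixed with orthonormal columns. Then the minimizer over C ∈ ℝ^{p×q} of ‖Y − XB‖_F², assuming Z := XU has full column rank, is C* = (ZᵀZ)^{-1}Zᵀ Y V. -/
import Mathlib


open Matrix

/-- Squared Frobenius norm of a matrix. -/
def frobSq {m n : Type*} [Fintype m] [Fintype n] (X : Matrix m n ℝ) : ℝ :=
  ∑ i, ∑ j, (X i j) ^ 2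

lemma frobSq_eq_trace {m n : Type*} [Fintype m] [Fintype n] (X : Matrix m n ℝ) :
    frobSq X = (Xᵀ * X).trace := by
  simp only [frobSq, Matrix.trace, Matrix.diag, Matrix.mul_apply,
    Matrix.transpose_apply, sq]
  exact Finset.sum_comm

lemma frobSq_nonneg {m n : Type*} [Fintype m] [Fintype n] (X : Matrix m n ℝ) :
    0 ≤ frobSq X := by
  apply Finset.sum_nonneg; intro i _
  apply Finset.sum_nonneg; intro j _
  positivity

theorem bilinear_core_update {M P Q p q : ℕ}
    (X : Matrix (Fin M) (Fin P) ℝ) (Y : Matrix (Fin M) (Fin Q) ℝ)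
    (U : Matrix (Fin P) (Fin p) ℝ) (V : Matrix (Fin Q) (Fin q) ℝ)
    (hU : Uᵀ * U = 1) (hV : Vᵀ * V = 1)
    (hZ : IsUnit ((X * U)ᵀ * (X * U)).det) :
    ∀ C : Matrix (Fin p) (Fin q) ℝ,
      frobSq (Y - X * (U * (((X * U)ᵀ * (X * U))⁻¹ * (X * U)ᵀ * Y * V) * Vᵀ)) ≤
        frobSq (Y - X * (U * C * Vᵀ)) := by
  intro C
  set Z : Matrix (Fin M) (Fin p) ℝ := X * U with hZdef
  set Cs : Matrix (Fin p) (Fin q) ℝ := (Zᵀ * Z)⁻¹ * Zᵀ * Y * V with hCs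
  set R : Matrix (Fin M) (Fin Q) ℝ := Y - Z * Cs * Vᵀ with hR
  have hXU : ∀ D : Matrix (Fin p) (Fin q) ℝ, X * (U * D * Vᵀ) = Z * D * Vᵀ := by
    intro D; simp [hZdef, Matrix.mul_assoc]
  -- orthogonality
  have h0 : Zᵀ * R * V = 0 := by
    have hinv : Zᵀ * Z * (Zᵀ * Z)⁻¹ = 1 := Matrix.mul_nonsing_inv _ hZ
    have : Zᵀ * R * V
        = Zᵀ * Y * V - (Zᵀ * Z * (Zᵀ * Z)⁻¹) * (Zᵀ * Y * V) := by
      simp [hR, hCs, Matrix.mul_sub, Matrix.sub_mul, Matrix.mul_assoc, hV]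
    rw [this, hinv, Matrix.one_mul, sub_self]
  have hsplit : Y - X * (U * C * Vᵀ) = R + Z * (Cs - C) * Vᵀ := by
    rw [hXU, hR]
    simp [Matrix.sub_mul, Matrix.mul_sub]
  have hcross : (Rᵀ * (Z * (Cs - C) * Vᵀ)).trace = 0 := by
    have e1 : Rᵀ * (Z * (Cs - C) * Vᵀ) = (Rᵀ * Z * (Cs - C)) * Vᵀ := by
      simp [Matrix.mul_assoc]
    have e2 : Vᵀ * (Rᵀ * Z * (Cs - C)) = (Zᵀ * R * V)ᵀ * (Cs - C) := by
      simp [Matrix.transpose_mul, Matrix.mul_assoc]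
    rw [e1, Matrix.trace_mul_comm, e2, h0]
    simp
  have hcross' : ((Z * (Cs - C) * Vᵀ)ᵀ * R).trace = 0 := by
    rw [← Matrix.trace_transpose, Matrix.transpose_mul, Matrix.transpose_transpose,
      hcross]
  rw [hXU, ← hR, hsplit, frobSq_eq_trace, frobSq_eq_trace]
  rw [Matrix.transpose_add, Matrix.add_mul, Matrix.mul_add, Matrix.mul_add,
    Matrix.trace_add, Matrix.trace_add, Matrix.trace_add, hcross, hcross']
  have := frobSq_nonneg (Z * (Cs - C) * Vᵀ)
  rw [frobSq_eq_trace] at this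
  linarith
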